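/- arXiv:2205.06923 — 3 statements merged into one kernel-verified Lean document; each statement's English description precedes it below -/
import Mathlib

section
/- Let Z be a centered Gaussian random vector in ℝ^d with nondegenerate covariance matrix Σ. Then for every Borel set V ⊆ ℝ^d and every vector v ∈ ℝ^d, P(Z ∈ v + V) ≥ 2^{−d/2} · exp(−vᵀ Σ^{−1} v) · P(Z ∈ √2·V), where √2·V = {√2 y : y ∈ V} and v + V = {v + y : y ∈ V}. -/
open MeasureTheory ProbabilityTheory Set
open scoped ENNReal NNReal Pointwise ProbabilityTheory

noncomputable section

/-- `W` is a standard one-dimensional Brownian motion: it starts at `0`, has a.s. continuous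
paths, Gaussian increments `W t - W s ∼ N(0, t - s)` and independent increments. -/
def IsStandardBM {Ω : Type*} [MeasureSpace Ω] (W : ℝ → Ω → ℝ) : Prop :=
  (∀ t : ℝ, Measurable (W t)) ∧
  (∀ᵐ ω ∂(ℙ : Measure Ω), W 0 ω = 0) ∧
  (∀ᵐ ω ∂(ℙ : Measure Ω), Continuous fun t => W t ω) ∧
  (∀ s t : ℝ, 0 ≤ s → s ≤ t →
    Measure.map (fun ω => W t ω - W s ω) ℙ = gaussianReal 0 (t - s).toNNReal) ∧
  (∀ n : ℕ, ∀ ts : Fin (n + 1) → ℝ, Monotone ts → 0 ≤ ts 0 →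
    iIndepFun
      (fun i : Fin n => fun ω => W (ts i.succ) ω - W (ts i.castSucc) ω) ℙ)

/-- `B` is a `d`-dimensional Brownian motion whose components are independent standard
one-dimensional Brownian motions. -/
def IsMultiBM {Ω : Type*} [MeasureSpace Ω] {d : ℕ} (B : ℝ → Ω → Fin d → ℝ) : Prop :=
  (∀ i : Fin d, IsStandardBM fun t ω => B t ω i) ∧
  iIndepFun (fun (i : Fin d) (ω : Ω) (t : ℝ) => B t ω i) ℙ

/-- The set `S` satisfies the cone condition with respect to the process `Z` with the (strictly
positive) function `ε`: for every `x ∈ S` there is a Borel set `V ⊆ S` containing `x`, not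
depending on `t`, with `V - x ⊆ C • (V - x)` for all `C > 1` and `P(Z t ∈ V - x) ≥ ε t` for all
`t > 0`. -/
def ConeCondition {Ω : Type*} [MeasureSpace Ω] {d : ℕ} (Z : ℝ → Ω → Fin d → ℝ)
    (S : Set (Fin d → ℝ)) (ε : ℝ → ℝ) : Prop :=
  (∀ t : ℝ, 0 < t → 0 < ε t) ∧
  ∀ x ∈ S, ∃ V : Set (Fin d → ℝ), MeasurableSet V ∧ V ⊆ S ∧ x ∈ V ∧
    (∀ C : ℝ, 1 < C → (fun v => v - x) '' V ⊆ C • ((fun v => v - x) '' V)) ∧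
    ∀ t : ℝ, 0 < t → ENNReal.ofReal (ε t) ≤ ℙ {ω | Z t ω + x ∈ V}

/-- `c : [0,∞) → ℝ^d` belongs to `RV_T(1/2)`: it is continuous and for some `M > 0`,
`|c_i(t) - c_i(T)| ≤ M |t - T|^{1/2}` for all `i` and all `t ∈ [0,T]`. -/
def MemRVhalf {d : ℕ} (c : ℝ → Fin d → ℝ) (T : ℝ) : Prop :=
  Continuous c ∧ ∃ M : ℝ, 0 < M ∧ ∀ i : Fin d, ∀ t ∈ Set.Icc (0 : ℝ) T,
    |c t i - c T i| ≤ M * |t - T| ^ ((1 : ℝ) / 2)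

/-- The quadratic form `q ↦ qᵀ M q`. -/
def quadForm {d : ℕ} (M : Matrix (Fin d) (Fin d) ℝ) (q : Fin d → ℝ) : ℝ :=
  dotProduct q (M.mulVec q)

/-- Covariance matrix of the Gaussian vector `(Z_1(v_1), …, Z_d(v_d))` where `Z = A B`:
`Σ(v)_{ij} = min(v_i, v_j) (A Aᵀ)_{ij}`.  In particular `covMat A (fun _ => T) = T • A Aᵀ`
is the covariance matrix of `Z(T)`. -/
def covMat {d : ℕ} (A : Matrix (Fin d) (Fin d) ℝ) (v : Fin d → ℝ) :
    Matrix (Fin d) (Fin d) ℝ :=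
  Matrix.of fun i j => min (v i) (v j) * (A * A.transpose) i j

/-- The constant `𝔠(T) = inf_{t ∈ [0,T)} exp(-T ((c(T)-c(t))/√(T-t))ᵀ Σ⁻¹ ((c(T)-c(t))/√(T-t)))`
where `Σ = T • A Aᵀ` is the covariance matrix of `Z(T)`. -/
def frakC {d : ℕ} (A : Matrix (Fin d) (Fin d) ℝ) (c : ℝ → Fin d → ℝ) (T : ℝ) : ℝ :=
  sInf ((fun t => Real.exp (-(T * quadForm (covMat A fun _ => T)⁻¹
    fun i => (c T i - c t i) / Real.sqrt (T - t)))) '' Set.Ico 0 T)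

/-!
The Gaussian density satisfies `φ(v + y) ≥ e^{-vᵀΣ⁻¹v} φ(√2 y)` pointwise, because
`(v + y)ᵀΣ⁻¹(v + y) ≤ 2 vᵀΣ⁻¹v + 2 yᵀΣ⁻¹y`. Integrating over `y ∈ V` and changing variables
(a translation on the left, the dilation `y ↦ √2 y` with Jacobian `2^{d/2}` on the right) gives
the claim.
-/

section QuadForm

variable {d : ℕ}

theorem quadForm_smul (M : Matrix (Fin d) (Fin d) ℝ) (r : ℝ) (x : Fin d → ℝ) :
    quadForm M (r • x) = r ^ 2 * quadForm M x := by
  simp only [quadForm, Matrix.mulVec_smul, smul_dotProduct, dotProduct_smul, smul_eq_mul]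
  ring

theorem quadForm_add_add_quadForm_sub (M : Matrix (Fin d) (Fin d) ℝ) (x y : Fin d → ℝ) :
    quadForm M (x + y) + quadForm M (x - y) = 2 * quadForm M x + 2 * quadForm M y := by
  simp only [quadForm, Matrix.mulVec_add, Matrix.mulVec_sub, dotProduct_add, add_dotProduct,
    dotProduct_sub, sub_dotProduct]
  ring

theorem quadForm_add_le {M : Matrix (Fin d) (Fin d) ℝ} (hM : M.PosSemidef) (x y : Fin d → ℝ) :
    quadForm M (x + y) ≤ 2 * quadForm M x + 2 * quadForm M y := by
  have hsub : 0 ≤ quadForm M (x - y) := by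
    simpa [quadForm] using hM.dotProduct_mulVec_nonneg (x - y)
  linarith [quadForm_add_add_quadForm_sub M x y]

theorem exp_neg_quadForm_mul_le {M : Matrix (Fin d) (Fin d) ℝ} (hM : M.PosSemidef)
    (v y : Fin d → ℝ) :
    Real.exp (-quadForm M v) * Real.exp (-quadForm M (Real.sqrt 2 • y) / 2) ≤
      Real.exp (-quadForm M (v + y) / 2) := by
  rw [← Real.exp_add, Real.exp_le_exp, quadForm_smul, Real.sq_sqrt zero_le_two]
  linarith [quadForm_add_le hM v y]

end QuadForm

def gaussianDensity {d : ℕ} (Sig : Matrix (Fin d) (Fin d) ℝ) (x : Fin d → ℝ) : ℝ :=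
  (2 * Real.pi) ^ (-(d : ℝ) / 2) * Sig.det ^ (-(1 : ℝ) / 2) * Real.exp (-quadForm Sig⁻¹ x / 2)

theorem exp_neg_quadForm_mul_gaussianDensity_le {d : ℕ} {Sig : Matrix (Fin d) (Fin d) ℝ}
    (hSig : Sig.PosDef) (v y : Fin d → ℝ) :
    Real.exp (-quadForm Sig⁻¹ v) * gaussianDensity Sig (Real.sqrt 2 • y) ≤
      gaussianDensity Sig (v + y) := by
  have hdet : 0 < Sig.det := hSig.det_pos
  rw [gaussianDensity, gaussianDensity, mul_left_comm]
  exact mul_le_mul_of_nonneg_left (exp_neg_quadForm_mul_le hSig.inv.posSemidef v y)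
    (by positivity)

theorem measure_preimage_eq_setLIntegral {Ω α : Type*} [MeasurableSpace Ω] [MeasurableSpace α]
    {P : Measure Ω} {μ : Measure α} {X : Ω → α} (hX : Measurable X) {f : α → ℝ≥0∞}
    (hXf : P.map X = μ.withDensity f) {S : Set α} (hS : MeasurableSet S) :
    P (X ⁻¹' S) = ∫⁻ x in S, f x ∂μ := by
  rw [← Measure.map_apply hX hS, hXf, withDensity_apply _ hS]

theorem setLIntegral_comp_add_left {G : Type*} [MeasurableSpace G] [AddGroup G]
    [MeasurableAdd G] (μ : Measure G) [μ.IsAddLeftInvariant] (f : G → ℝ≥0∞) (g : G)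
    (s : Set G) :
    ∫⁻ y in s, f (g + y) ∂μ = ∫⁻ x in g +ᵥ s, f x ∂μ :=
  (measurePreserving_add_left μ g).setLIntegral_comp_emb
    (MeasurableEquiv.addLeft g).measurableEmbedding f s

theorem setLIntegral_comp_smul {E : Type*} [NormedAddCommGroup E] [NormedSpace ℝ E]
    [MeasurableSpace E] [BorelSpace E] [FiniteDimensional ℝ E] (μ : Measure E)
    [μ.IsAddHaarMeasure] (f : E → ℝ≥0∞) {r : ℝ} (hr : r ≠ 0) (s : Set E) :
    ∫⁻ y in s, f (r • y) ∂μ =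
      ENNReal.ofReal |(r ^ Module.finrank ℝ E)⁻¹| * ∫⁻ x in r • s, f x ∂μ := by
  let e : E ≃ᵐ E := (Homeomorph.smul (isUnit_iff_ne_zero.2 hr).unit).toMeasurableEquiv
  have he : ⇑e = (r • ·) := rfl
  rw [← smul_eq_mul, ← lintegral_smul_measure, ← Measure.restrict_smul,
    ← Measure.map_addHaar_smul μ hr, ← he, e.restrict_map, e.measurableEmbedding.lintegral_map,
    he, preimage_smul₀ hr, inv_smul_smul₀ hr]

theorem stmt_9_general {Ω : Type*} [MeasureSpace Ω]
    {d : ℕ} (Sig : Matrix (Fin d) (Fin d) ℝ) (hSig : Sig.PosDef)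
    (Zv : Ω → Fin d → ℝ) (hZmeas : Measurable Zv)
    (hZ : Measure.map Zv ℙ = volume.withDensity fun x : Fin d → ℝ =>
      ENNReal.ofReal ((2 * Real.pi) ^ (-(d : ℝ) / 2) * Sig.det ^ (-(1 : ℝ) / 2) *
        Real.exp (-quadForm Sig⁻¹ x / 2)))
    (V : Set (Fin d → ℝ)) (hV : MeasurableSet V) (v : Fin d → ℝ) :
    ENNReal.ofReal ((2 : ℝ) ^ (-(d : ℝ) / 2) * Real.exp (-quadForm Sig⁻¹ v)) *
        ℙ {ω | Zv ω ∈ Real.sqrt 2 • V} ≤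
      ℙ {ω | Zv ω ∈ v +ᵥ V} := by
  set φ : (Fin d → ℝ) → ℝ≥0∞ := fun x => ENNReal.ofReal (gaussianDensity Sig x)
  have hprob (S : Set (Fin d → ℝ)) (hS : MeasurableSet S) :
      ℙ {ω | Zv ω ∈ S} = ∫⁻ x in S, φ x :=
    measure_preimage_eq_setLIntegral hZmeas hZ hS
  have hjac : |(Real.sqrt 2 ^ Module.finrank ℝ (Fin d → ℝ))⁻¹| = (2 : ℝ) ^ (-(d : ℝ) / 2) := by
    rw [Module.finrank_fin_fun, Real.sqrt_eq_rpow, ← Real.rpow_natCast,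
      ← Real.rpow_mul zero_le_two, ← Real.rpow_neg zero_le_two, abs_of_nonneg (by positivity)]
    ring_nf
  have hdilate : ENNReal.ofReal ((2 : ℝ) ^ (-(d : ℝ) / 2)) * ∫⁻ x in Real.sqrt 2 • V, φ x =
      ∫⁻ y in V, φ (Real.sqrt 2 • y) := by
    rw [setLIntegral_comp_smul volume φ (by positivity) V, hjac]
  calc ENNReal.ofReal ((2 : ℝ) ^ (-(d : ℝ) / 2) * Real.exp (-quadForm Sig⁻¹ v)) *
        ℙ {ω | Zv ω ∈ Real.sqrt 2 • V}
      = ∫⁻ y in V, ENNReal.ofReal (Real.exp (-quadForm Sig⁻¹ v)) * φ (Real.sqrt 2 • y) := by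
        rw [hprob _ (hV.const_smul_of_ne_zero (by positivity)), ENNReal.ofReal_mul (by positivity),
          mul_right_comm, hdilate, mul_comm, lintegral_const_mul' _ _ ENNReal.ofReal_ne_top]
    _ ≤ ∫⁻ y in V, φ (v + y) := setLIntegral_mono' hV fun y _ => by
        rw [← ENNReal.ofReal_mul (Real.exp_nonneg _)]
        exact ENNReal.ofReal_le_ofReal (exp_neg_quadForm_mul_gaussianDensity_le hSig v y)
    _ = ℙ {ω | Zv ω ∈ v +ᵥ V} := by
        rw [setLIntegral_comp_add_left, hprob _ (hV.const_vadd v)]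

/-- For a centered Gaussian vector `Z ∼ N(0, Σ)` in `ℝ^d` with nondegenerate covariance `Σ`
(expressed through its Lebesgue density), for every Borel `V` and every `v ∈ ℝ^d`,
`P(Z ∈ v + V) ≥ 2^{-d/2} exp(-vᵀ Σ⁻¹ v) P(Z ∈ √2 V)`. -/
theorem stmt_9 {Ω : Type*} [MeasureSpace Ω] [IsProbabilityMeasure (ℙ : Measure Ω)]
    {d : ℕ} (Sig : Matrix (Fin d) (Fin d) ℝ) (hSig : Sig.PosDef)
    (Zv : Ω → Fin d → ℝ) (hZmeas : Measurable Zv)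
    (hZ : Measure.map Zv ℙ = volume.withDensity fun x : Fin d → ℝ =>
      ENNReal.ofReal ((2 * Real.pi) ^ (-(d : ℝ) / 2) * Sig.det ^ (-(1 : ℝ) / 2) *
        Real.exp (-quadForm Sig⁻¹ x / 2)))
    (V : Set (Fin d → ℝ)) (hV : MeasurableSet V) (v : Fin d → ℝ) :
    ENNReal.ofReal ((2 : ℝ) ^ (-(d : ℝ) / 2) * Real.exp (-quadForm Sig⁻¹ v)) *
        ℙ {ω | Zv ω ∈ Real.sqrt 2 • V} ≤
      ℙ {ω | Zv ω ∈ v +ᵥ V} :=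
  stmt_9_general Sig hSig Zv hZmeas hZ V hV v
end
end

section
/- Let W be a standard one-dimensional Brownian motion, let λ ≥ 0 and β ∈ [1/2, 1]. Then there exists a constant C > 0, not depending on u, such that for every u > 1, P(∃ t ∈ [0,1] : W(t) − λ t^β ≥ u) ≤ C · P(W(1) − λ ≥ u). -/
/-!
First passage on a finite grid `0 = s₀ ≤ ⋯ ≤ sₙ ≤ 1`: let `k` be the first step at which
`W(s_k) ≥ u + λ s_kᵝ`. Independently of the path up to `s_k`, the increment
`W 1 - W(s_k) ∼ N(0, v)`, `v = 1 - s_k ≤ 1`, exceeds `λ v` with probability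
`P(N(0,1) ≥ λ √v) ≥ ε = P(N(0,1) ≥ λ)`; on that event `W 1 ≥ u + λ (s_kᵝ + 1 - s_k) ≥ u + λ`,
because `sᵝ ≥ s` on `[0,1]` for `β ≤ 1`. Summing over the disjoint first-passage events gives
`ε P(∃ k, W(s_k) - λ s_kᵝ ≥ u) ≤ P(W 1 - λ ≥ u)`. Continuity of the paths lets nested dyadic
grids catch the continuous-time event up to a slack `δ`, which is removed by continuity of
measure; hence `C = 1/ε`.
-/

open MeasureTheory ProbabilityTheory Set
open scoped ENNReal NNReal Pointwise ProbabilityTheory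

noncomputable section

open Filter Topology

theorem gaussianReal_Ici_pos (a : ℝ) : 0 < gaussianReal 0 1 (Ici a) := by
  refine pos_iff_ne_zero.2 fun h => ?_
  simpa [Real.volume_Ici] using gaussianReal_absolutelyContinuous' 0 one_ne_zero h

theorem gaussianReal_Ici_le_Ici_mul {a : ℝ} (ha : 0 ≤ a) {v : ℝ≥0} (hv : v ≤ 1) :
    gaussianReal 0 1 (Ici a) ≤ gaussianReal 0 v (Ici (a * v)) := by
  have hscale : (gaussianReal 0 1).map (√v * ·) = gaussianReal 0 v := by
    rw [gaussianReal_map_const_mul]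
    congr 1
    · ring
    · ext; simp
  rw [← hscale, Measure.map_apply (measurable_const_mul _) measurableSet_Ici]
  refine measure_mono fun x (hx : a ≤ x) => ?_
  have hsqrt : √(v : ℝ) ≤ 1 := Real.sqrt_le_one.mpr (by exact_mod_cast hv)
  show a * v ≤ √v * x
  calc a * v = √v * (√v * a) := by rw [← mul_assoc, Real.mul_self_sqrt v.coe_nonneg, mul_comm]
    _ ≤ √v * x := by gcongr; exact (mul_le_of_le_one_left ha hsqrt).trans hx

theorem mul_measure_partialSups_le {Ω : Type*} [MeasurableSpace Ω] {μ : Measure Ω}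
    {A C : ℕ → Set Ω} {T : Set Ω} {ε : ℝ≥0∞} {n : ℕ}
    (hA : ∀ k, MeasurableSet (A k)) (hC : ∀ k, MeasurableSet (C k))
    (hindep : ∀ k ≤ n, μ (disjointed A k ∩ C k) = μ (disjointed A k) * μ (C k))
    (hε : ∀ k ≤ n, ε ≤ μ (C k)) (hT : ∀ k ≤ n, A k ∩ C k ⊆ T) :
    ε * μ (partialSups A n) ≤ μ T := by
  have hdisj : (↑(Finset.Iic n) : Set ℕ).PairwiseDisjoint (disjointed A) :=
    (disjoint_disjointed A).set_pairwise _
  calc ε * μ (partialSups A n) = ∑ k ∈ Finset.Iic n, ε * μ (disjointed A k) := by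
        rw [← biUnion_Iic_disjointed, measure_biUnion_finset hdisj fun k _ => .disjointed hA k,
          Finset.mul_sum]
    _ ≤ ∑ k ∈ Finset.Iic n, μ (disjointed A k ∩ C k) := Finset.sum_le_sum fun k hk => by
        rw [hindep k (Finset.mem_Iic.1 hk), mul_comm]
        exact mul_le_mul_right (hε k (Finset.mem_Iic.1 hk)) _
    _ = μ (⋃ k ∈ Finset.Iic n, disjointed A k ∩ C k) :=
        (measure_biUnion_finset (hdisj.mono fun k => inter_subset_left)
          fun k _ => (MeasurableSet.disjointed hA k).inter (hC k)).symm
    _ ≤ μ T := measure_mono <| iUnion₂_subset fun k hk =>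
        (inter_subset_inter_left _ (disjointed_subset A k)).trans (hT k (Finset.mem_Iic.1 hk))

namespace IsStandardBM

variable {Ω : Type*} [MeasureSpace Ω] {W : ℝ → Ω → ℝ}

theorem indepFun_past_increment (hW : IsStandardBM W) {s : ℕ → ℝ} (hs : Monotone s)
    (hs0 : 0 ≤ s 0) {k : ℕ} {t : ℝ} (hkt : s k ≤ t) :
    IndepFun (fun ω (j : Fin (k + 1)) => W (s j) ω - W (s 0) ω)
      (fun ω => W t ω - W (s k) ω) ℙ := by
  set r : ℕ → ℝ := fun i => if i ≤ k then s i else t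
  have hr : Monotone r := by
    intro i j hij
    simp only [r]
    split_ifs with hi hj hj
    · exact hs hij
    · exact (hs hi).trans hkt
    · omega
    · exact le_rfl
  set Y : ℕ → Ω → ℝ := fun i ω => W (r (i + 1)) ω - W (r i) ω
  have hind : iIndepFun (fun i : Fin (k + 1) => Y i) ℙ :=
    hW.2.2.2.2 (k + 1) (fun i => r i) (hr.comp Fin.val_strictMono.monotone) (by simpa [r])
  set m : Fin (k + 1) → MeasurableSpace Ω := fun i => MeasurableSpace.comap (Y i) inferInstance
  have hY : ∀ (S : Set (Fin (k + 1))) (i : Fin (k + 1)), i ∈ S →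
      Measurable[⨆ i ∈ S, m i] (Y i) := fun S i hi =>
    (comap_measurable (Y i)).mono (le_iSup₂ (f := fun i (_ : i ∈ S) => m i) i hi) le_rfl
  have hST : Disjoint {i : Fin (k + 1) | i < k} {Fin.last k} := by simp
  rw [IndepFun_iff_Indep]
  refine indep_of_indep_of_le (indep_iSup_of_disjoint (m := m)
    (fun i => ((hW.1 _).sub (hW.1 _)).comap_le) hind.iIndep hST) ?_ ?_
  · refine Measurable.comap_le
      ((@measurable_pi_iff _ _ _ (⨆ i ∈ {i : Fin (k + 1) | i < k}, m i) _ _).2 fun j => ?_)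
    have htelescope :
        (fun ω => W (s j) ω - W (s 0) ω) = fun ω => ∑ i ∈ Finset.range j, Y i ω := by
      ext ω
      rw [Finset.sum_range_sub (fun i => W (r i) ω)]
      simp [r, Fin.is_le]
    rw [htelescope]
    refine Finset.measurable_sum _ fun i hi => ?_
    have hij : i < j := Finset.mem_range.1 hi
    exact hY _ ⟨i, by omega⟩ (show i < k by omega)
  · have hlast : (fun ω => W t ω - W (s k) ω) = Y k := by
      ext ω
      simp [Y, r]
    rw [hlast]
    exact (hY {Fin.last k} _ (mem_singleton _)).comap_le

theorem gaussianReal_mul_measure_exists_grid_le (hW : IsStandardBM W) {lam β : ℝ}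
    (hlam : 0 ≤ lam) (hβ : β ≤ 1) {s : ℕ → ℝ} (hs : Monotone s) (hs0 : s 0 = 0) {n : ℕ}
    (hsn : s n ≤ 1) (u : ℝ) :
    gaussianReal 0 1 (Ici lam) *
        ℙ {ω | ∃ k ≤ n, u + lam * s k ^ β ≤ W (s k) ω - W 0 ω} ≤
      ℙ {ω | u + lam ≤ W 1 ω - W 0 ω} := by
  set A : ℕ → Set Ω := fun k => {ω | u + lam * s k ^ β ≤ W (s k) ω - W 0 ω}
  set C : ℕ → Set Ω := fun k => {ω | lam * (1 - s k) ≤ W 1 ω - W (s k) ω}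
  have hunion : {ω | ∃ k ≤ n, u + lam * s k ^ β ≤ W (s k) ω - W 0 ω} = partialSups A n := by
    ext; simp [A, partialSups_eq_biSup]
  have hs_nonneg : ∀ k, 0 ≤ s k := fun k => hs0 ▸ hs k.zero_le
  rw [hunion]
  refine mul_measure_partialSups_le (C := C)
    (fun k => measurableSet_le measurable_const ((hW.1 _).sub (hW.1 _)))
    (fun k => measurableSet_le measurable_const ((hW.1 _).sub (hW.1 _))) (fun k hk => ?_)
    (fun k hk => ?_) (fun k hk => ?_)
  · have hindep := hW.indepFun_past_increment hs hs0.ge (hsn.trans' (hs hk))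
    rw [hs0] at hindep
    refine hindep.meas_inter ?_ ⟨Ici (lam * (1 - s k)), measurableSet_Ici, rfl⟩
    have hA : ∀ j ≤ k, MeasurableSet[MeasurableSpace.comap
        (fun ω (j : Fin (k + 1)) => W (s j) ω - W 0 ω) inferInstance] (A j) := fun j hj =>
      ⟨{y : Fin (k + 1) → ℝ | u + lam * s j ^ β ≤ y ⟨j, by omega⟩},
        measurableSet_le measurable_const (measurable_pi_apply _), rfl⟩
    rw [disjointed_eq_inter_compl]
    exact (hA k le_rfl).inter (.iInter fun j => .iInter fun hj => (hA j hj.le).compl)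
  · have hlaw := hW.2.2.2.1 (s k) 1 (hs_nonneg k) (hsn.trans' (hs hk))
    have hC : C k = (fun ω => W 1 ω - W (s k) ω) ⁻¹' Ici (lam * (1 - s k)) := rfl
    rw [hC, ← Measure.map_apply (f := fun ω => W 1 ω - W (s k) ω) ((hW.1 _).sub (hW.1 _))
      measurableSet_Ici, hlaw]
    convert gaussianReal_Ici_le_Ici_mul hlam (v := (1 - s k).toNNReal) ?_ using 4
    · rw [Real.coe_toNNReal _ (by linarith [hs hk])]
    · simpa using hs_nonneg k
  · rintro ω ⟨hA, hC⟩
    have hrpow : s k ≤ s k ^ β :=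
      Real.self_le_rpow_of_le_one (hs_nonneg k) (hsn.trans' (hs hk)) hβ
    simp only [A, C, mem_ofPred_eq] at hA hC ⊢
    nlinarith

theorem gaussianReal_mul_measure_exists_le_sub (hW : IsStandardBM W) {lam β : ℝ}
    (hlam : 0 ≤ lam) (hβ : β ∈ Icc 0 1) (u : ℝ) {δ : ℝ} (hδ : 0 < δ) :
    gaussianReal 0 1 (Ici lam) * ℙ {ω | ∃ t ∈ Icc (0 : ℝ) 1, u ≤ W t ω - lam * t ^ β} ≤
      ℙ {ω | u - δ ≤ W 1 ω - lam} := by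
  set D : ℕ → Set Ω := fun m => {ω | ∃ k : ℕ, k ≤ 2 ^ m ∧
    u - δ + lam * ((k : ℝ) / 2 ^ m) ^ β ≤ W ((k : ℝ) / 2 ^ m) ω - W 0 ω}
  have hD : Monotone D := by
    refine monotone_nat_of_le_succ fun m ω ⟨k, hk, hkω⟩ => ⟨2 * k, by rw [pow_succ]; omega, ?_⟩
    have hrefine : ((2 * k : ℕ) : ℝ) / 2 ^ (m + 1) = (k : ℝ) / 2 ^ m := by
      push_cast
      rw [pow_succ]
      field_simp
    rwa [hrefine]
  have hcover : {ω | ∃ t ∈ Icc (0 : ℝ) 1, u ≤ W t ω - lam * t ^ β} ≤ᵐ[ℙ] ⋃ m, D m := by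
    filter_upwards [hW.2.1, hW.2.2.1] with ω hW0 hWc
    rintro ⟨t, ⟨ht0, ht1⟩, hut⟩
    have hpath : Continuous fun t => W t ω - lam * t ^ β :=
      hWc.sub (continuous_const.mul (Real.continuous_rpow_const hβ.1))
    have hdyadic : Tendsto (fun m : ℕ => (⌊t * 2 ^ m⌋₊ : ℝ) / 2 ^ m) atTop (𝓝 t) :=
      (tendsto_nat_floor_mul_div_atTop ht0).comp (tendsto_pow_atTop_atTop_of_one_lt one_lt_two)
    obtain ⟨m, hm⟩ := (((hpath.tendsto t).comp hdyadic).eventually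
      (lt_mem_nhds (show u - δ < W t ω - lam * t ^ β by linarith))).exists
    refine mem_iUnion.2 ⟨m, ⌊t * 2 ^ m⌋₊, Nat.floor_le_of_le ?_, ?_⟩
    · push_cast
      nlinarith [pow_pos (two_pos : (0 : ℝ) < 2) m]
    · simp only [Function.comp_apply] at hm
      rw [hW0]
      linarith
  calc gaussianReal 0 1 (Ici lam) * ℙ {ω | ∃ t ∈ Icc (0 : ℝ) 1, u ≤ W t ω - lam * t ^ β}
      ≤ ⨆ m, gaussianReal 0 1 (Ici lam) * ℙ (D m) := by
        rw [← ENNReal.mul_iSup, ← hD.measure_iUnion]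
        exact mul_le_mul_right (measure_mono_ae hcover) _
    _ ≤ ℙ {ω | u - δ + lam ≤ W 1 ω - W 0 ω} := iSup_le fun m =>
        hW.gaussianReal_mul_measure_exists_grid_le hlam hβ.2 (s := fun k => (k : ℝ) / 2 ^ m)
          (fun i j hij => by dsimp only; gcongr) (by simp) (by simp) (u - δ)
    _ = ℙ {ω | u - δ ≤ W 1 ω - lam} := measure_congr <| by
        filter_upwards [hW.2.1] with ω hW0
        change (u - δ + lam ≤ W 1 ω - W 0 ω) = (u - δ ≤ W 1 ω - lam)
        rw [hW0, sub_zero, le_sub_iff_add_le]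

theorem gaussianReal_mul_measure_exists_le [IsProbabilityMeasure (ℙ : Measure Ω)]
    (hW : IsStandardBM W) {lam β : ℝ} (hlam : 0 ≤ lam) (hβ : β ∈ Icc 0 1) (u : ℝ) :
    gaussianReal 0 1 (Ici lam) * ℙ {ω | ∃ t ∈ Icc (0 : ℝ) 1, u ≤ W t ω - lam * t ^ β} ≤
      ℙ {ω | u ≤ W 1 ω - lam} := by
  have hInter : {ω | u ≤ W 1 ω - lam} = ⋂ δ > 0, {ω | u - δ ≤ W 1 ω - lam} := by
    ext ω
    simp only [mem_ofPred_eq, mem_iInter]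
    exact ⟨fun h δ hδ => by linarith, le_of_forall_sub_le⟩
  have hlim : Tendsto (fun δ => ℙ {ω | u - δ ≤ W 1 ω - lam}) (𝓝[>] 0)
      (𝓝 (ℙ {ω | u ≤ W 1 ω - lam})) := by
    have hmeas : ∀ δ, MeasurableSet {ω | u - δ ≤ W 1 ω - lam} := fun δ =>
      measurableSet_le measurable_const ((hW.1 1).sub measurable_const)
    rw [hInter]
    exact tendsto_measure_biInter_gt (fun δ _ => (hmeas δ).nullMeasurableSet)
      (fun δ δ' _ hδ ω (h : u - δ ≤ _) => show u - δ' ≤ _ by linarith)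
      ⟨1, one_pos, measure_ne_top _ _⟩
  exact ge_of_tendsto hlim (eventually_nhdsWithin_of_forall fun δ hδ =>
    hW.gaussianReal_mul_measure_exists_le_sub hlam hβ u hδ)

end IsStandardBM

/-- **Section 2.2 (fractional Brownian motion, one dimension).** For a standard Brownian
motion `W`, `λ ≥ 0` and `β ∈ [1/2, 1]`, there is a constant `C > 0` not depending on `u` such
that for all `u > 1`,
`P(∃ t ∈ [0,1] : W(t) - λ t^β ≥ u) ≤ C P(W(1) - λ ≥ u)`. -/
theorem stmt_12 {Ω : Type*} [MeasureSpace Ω] [IsProbabilityMeasure (ℙ : Measure Ω)]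
    (W : ℝ → Ω → ℝ) (hW : IsStandardBM W)
    (lam : ℝ) (hlam : 0 ≤ lam) (β : ℝ) (hβ : β ∈ Set.Icc (1 / 2 : ℝ) 1) :
    ∃ C : ℝ, 0 < C ∧ ∀ u : ℝ, 1 < u →
      ℙ {ω | ∃ t ∈ Set.Icc (0 : ℝ) 1, u ≤ W t ω - lam * t ^ β} ≤
        ENNReal.ofReal C * ℙ {ω | u ≤ W 1 ω - lam} := by
  set ε := gaussianReal 0 1 (Ici lam)
  have hε0 : ε ≠ 0 := (gaussianReal_Ici_pos lam).ne'
  have hε : ε ≠ ∞ := measure_ne_top _ _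
  have hεpos : 0 < ε.toReal := ENNReal.toReal_pos hε0 hε
  refine ⟨ε.toReal⁻¹, inv_pos.2 hεpos, fun u _ => ?_⟩
  rw [ENNReal.ofReal_inv_of_pos hεpos, ENNReal.ofReal_toReal hε, ← ENNReal.div_eq_inv_mul,
    ENNReal.le_div_iff_mul_le (.inl hε0) (.inl hε), mul_comm]
  exact hW.gaussianReal_mul_measure_exists_le hlam ⟨by linarith [hβ.1], hβ.2⟩ u
end
end

section
/- Let W_1, …, W_d be independent standard one-dimensional Brownian motions, let H_1, …, H_d ∈ (1/2, 1], let c_1, …, c_d ∈ ℝ and T > 0. Then there exists a constant C > 0, not depending on u, such that for every u > 1, P(∃ t ∈ [0,T] : W_i(t^{2H_i}) − c_i t > u for all i ∈ {1,…,d}) ≤ C · P(W_i(T^{2H_i}) − c_i T > u for all i ∈ {1,…,d}). -/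
open MeasureTheory ProbabilityTheory Set
open scoped ENNReal NNReal Pointwise ProbabilityTheory

noncomputable section

/-!
Write `E t` for the event that `W_i(t^{2H_i}) - c_i t > u` for every `i`. On a finite grid in
`[0,T]`, split the union of the `E t` according to the first grid time `τ` at which it occurs.
By the weak Markov property the increments `W_i(T^{2H_i}) - W_i(τ^{2H_i})` are independent of
everything up to `τ`, and on the event that each of them is at least `c_i (T - τ)` the event
`E T` occurs. Since `2H_i ≥ 1`, `T^{2H_i} - τ^{2H_i} ≥ T^{2H_i - 1} (T - τ)`, so the threshold
standardized by the standard deviation stays bounded and that event has probability at least a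
constant `p > 0` independent of `τ` and `u`. Hence `p · P(⋃_grid E t) ≤ P(E T)`, and continuity
of the paths passes from finite grids to all of `[0,T]`; one may take `C = 1/p`.
-/

theorem gaussianReal_Ici_pos_s14 (μ : ℝ) {v : ℝ≥0} (hv : v ≠ 0) (K : ℝ) :
    0 < gaussianReal μ v (Ici K) :=
  pos_iff_ne_zero.2 fun h => by simpa using gaussianReal_absolutelyContinuous' μ hv h

theorem gaussianReal_Ici_le_of_le_mul_sqrt {v : ℝ≥0} {a K : ℝ} (h : a ≤ K * Real.sqrt v) :
    gaussianReal 0 1 (Ici K) ≤ gaussianReal 0 v (Ici a) := by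
  have hmap : (gaussianReal 0 1).map (fun x => Real.sqrt v * x) = gaussianReal 0 v := by
    rw [gaussianReal_map_const_mul, mul_zero, mul_one]
    congr
    exact Real.sq_sqrt v.2
  rw [← hmap, Measure.map_apply (measurable_const_mul _) measurableSet_Ici]
  refine measure_mono fun x (hx : K ≤ x) => ?_
  change a ≤ Real.sqrt v * x
  nlinarith [Real.sqrt_nonneg v]

theorem Real.rpow_sub_one_mul_sub_le_rpow_sub_rpow {p t T : ℝ} (hp : 1 ≤ p) (ht : 0 ≤ t)
    (htT : t ≤ T) : T ^ (p - 1) * (T - t) ≤ T ^ p - t ^ p := by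
  have hpow : ∀ x : ℝ, 0 ≤ x → x ^ p = x ^ (p - 1) * x := fun x hx => by
    rw [← Real.rpow_add_one' hx (by linarith), sub_add_cancel]
  rw [hpow T (ht.trans htT), hpow t ht]
  nlinarith [Real.rpow_le_rpow ht htT (by linarith : 0 ≤ p - 1)]

theorem exists_gaussianReal_Ici_le (c : ℝ) {p T : ℝ} (hp : 1 ≤ p) (hT : 0 < T) :
    ∃ K : ℝ, ∀ t ∈ Icc 0 T,
      gaussianReal 0 1 (Ici K) ≤ gaussianReal 0 (T ^ p - t ^ p).toNNReal (Ici (c * (T - t))) := by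
  refine ⟨|c| * Real.sqrt T / Real.sqrt (T ^ (p - 1)), fun t ⟨ht, htT⟩ => ?_⟩
  have hvar := Real.rpow_sub_one_mul_sub_le_rpow_sub_rpow hp ht htT
  have hvar_nonneg : 0 ≤ T ^ p - t ^ p :=
    (mul_nonneg (Real.rpow_nonneg hT.le _) (sub_nonneg.2 htT)).trans hvar
  refine gaussianReal_Ici_le_of_le_mul_sqrt ?_
  rw [Real.coe_toNNReal _ hvar_nonneg]
  calc c * (T - t) ≤ |c| * (Real.sqrt (T - t) * Real.sqrt (T - t)) := by
        rw [Real.mul_self_sqrt (sub_nonneg.2 htT)]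
        exact mul_le_mul_of_nonneg_right (le_abs_self c) (sub_nonneg.2 htT)
    _ ≤ |c| * (Real.sqrt T * Real.sqrt (T - t)) := by
        gcongr
        linarith
    _ = |c| * Real.sqrt T / Real.sqrt (T ^ (p - 1)) * Real.sqrt (T ^ (p - 1) * (T - t)) := by
        rw [Real.sqrt_mul (Real.rpow_nonneg hT.le _)]
        field_simp
    _ ≤ |c| * Real.sqrt T / Real.sqrt (T ^ (p - 1)) * Real.sqrt (T ^ p - t ^ p) := by
        gcongr

theorem ProbabilityTheory.iIndepFun.indepFun_pi_of_indepFun {Ω ι α β : Type*}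
    [MeasurableSpace Ω] [Fintype ι] [MeasurableSpace α] [MeasurableSpace β] {μ : Measure Ω}
    {X : ι → Ω → α} {Y : ι → Ω → β} (hX : ∀ i, Measurable (X i)) (hY : ∀ i, Measurable (Y i))
    (hXY : iIndepFun (fun i ω => (X i ω, Y i ω)) μ) (h : ∀ i, IndepFun (X i) (Y i) μ) :
    IndepFun (fun ω i => X i ω) (fun ω i => Y i ω) μ := by
  have := hXY.isProbabilityMeasure
  have hpair : ∀ i, Measurable fun ω => (X i ω, Y i ω) := fun i => (hX i).prodMk (hY i)
  rw [indepFun_iff_map_prod_eq_prod_map_map (by fun_prop) (by fun_prop),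
    (hXY.comp (fun _ => Prod.fst) fun _ => measurable_fst).map_fun_eq_pi_map
      fun i => (hX i).aemeasurable,
    (hXY.comp (fun _ => Prod.snd) fun _ => measurable_snd).map_fun_eq_pi_map
      fun i => (hY i).aemeasurable,
    ← (measurePreserving_arrowProdEquivProdArrow α β ι _ _).map_eq]
  simp_rw [← fun i => (h i).map_prod_eq_prod_map_map (hX i).aemeasurable (hY i).aemeasurable,
    ← hXY.map_fun_eq_pi_map fun i => (hpair i).aemeasurable]
  rw [Measure.map_map (MeasurableEquiv.measurable _) (measurable_pi_lambda _ hpair)]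
  rfl

/-- First-passage decomposition: `disjointed E i` is the event that `i` is the first index at
which `E` occurs. -/
theorem MeasureTheory.mul_measure_iUnion_le_of_disjointed {Ω ι : Type*} [MeasurableSpace Ω]
    [LinearOrder ι] [LocallyFiniteOrderBot ι] [Countable ι] {μ : Measure Ω}
    {E F : ι → Set Ω} {G : Set Ω} {p : ℝ≥0∞} (hE : ∀ i, MeasurableSet (E i))
    (hF : ∀ i, MeasurableSet (F i)) (hp : ∀ i, p ≤ μ (F i))
    (hindep : ∀ i, μ (disjointed E i ∩ F i) = μ (disjointed E i) * μ (F i))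
    (hG : ∀ i, E i ∩ F i ⊆ G) :
    p * μ (⋃ i, E i) ≤ μ G := by
  have hmeas : ∀ i, MeasurableSet (disjointed E i) :=
    fun i => disjointedRec (fun _ _ ht => ht.diff (hE _)) (hE i)
  calc p * μ (⋃ i, E i)
      = ∑' i, p * μ (disjointed E i) := by
        rw [← iUnion_disjointed, measure_iUnion (disjoint_disjointed E) hmeas,
          ENNReal.tsum_mul_left]
    _ ≤ ∑' i, μ (disjointed E i ∩ F i) := by
        gcongr with i
        rw [hindep, mul_comm]
        gcongr
        exact hp i
    _ = μ (⋃ i, disjointed E i ∩ F i) :=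
        (measure_iUnion (fun i j hij => ((disjoint_disjointed E) hij).mono
          inter_subset_left inter_subset_left) fun i => (hmeas i).inter (hF i)).symm
    _ ≤ μ G := measure_mono (iUnion_subset fun i =>
        (inter_subset_inter_left _ (disjointed_subset E i)).trans (hG i))

theorem MeasureTheory.measure_iUnion_le_of_forall_finset {Ω S : Type*} [MeasurableSpace Ω]
    {μ : Measure Ω} [TopologicalSpace S] [TopologicalSpace.SeparableSpace S] {E : S → Set Ω}
    (hE : ∀ᵐ ω ∂μ, IsOpen {t | ω ∈ E t}) {M : ℝ≥0∞}
    (h : ∀ s : Finset S, μ (⋃ t ∈ s, E t) ≤ M) :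
    μ (⋃ t, E t) ≤ M := by
  obtain ⟨D, hDc, hDd⟩ := TopologicalSpace.exists_countable_dense S
  have := hDc.to_subtype
  have hsub : (⋃ t, E t) ≤ᵐ[μ] ⋃ s : Finset D, ⋃ t ∈ s, E t := by
    filter_upwards [hE] with ω hω hmem
    obtain ⟨t, ht⟩ := mem_iUnion.1 hmem
    obtain ⟨q, hqD, hqU⟩ := hDd.exists_mem_open hω ⟨t, ht⟩
    exact mem_iUnion.2 ⟨{⟨q, hqD⟩}, by simpa using hqU⟩
  have hdir : Directed (· ⊆ ·) fun s : Finset D => ⋃ t ∈ s, E t :=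
    Monotone.directed_le fun s s' hss' => biUnion_subset_biUnion_left hss'
  calc μ (⋃ t, E t) ≤ μ (⋃ s : Finset D, ⋃ t ∈ s, E t) := measure_mono_ae hsub
    _ = ⨆ s : Finset D, μ (⋃ t ∈ s, E t) := hdir.measure_iUnion
    _ ≤ M := iSup_le fun s => by simpa using h (s.map (Function.Embedding.subtype _))

namespace IsStandardBM

variable {Ω : Type*} [MeasureSpace Ω] {W : ℝ → Ω → ℝ}

theorem isPreBrownianReal (hW : IsStandardBM W) :
    IsPreBrownianReal (fun t : ℝ≥0 => W t) ℙ := by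
  obtain ⟨hmeas, hzero, -, hlaw, hincr⟩ := hW
  refine HasIndepIncrements.isPreBrownianReal_of_hasLaw (fun t => ?_) fun n t ht => ?_
  · have hsub : HasLaw (fun ω => W t ω - W 0 ω) (gaussianReal 0 t) ℙ :=
      ⟨(hmeas _).sub (hmeas _) |>.aemeasurable, by simpa using hlaw 0 t le_rfl t.2⟩
    exact hsub.congr (by filter_upwards [hzero] with ω hω using by simp [hω])
  · exact hincr n (fun k => t k) (NNReal.coe_mono.comp ht) (t 0).2

theorem indepFun_eval_sub {ι : Type*} (hW : IsStandardBM W) {a b : ℝ} (ha : 0 ≤ a)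
    (hab : a ≤ b) (τ : ι → ℝ) (hτ : ∀ k, τ k ∈ Icc 0 a) :
    IndepFun (fun ω k => W (τ k) ω) (fun ω => W b ω - W a ω) ℙ := by
  have h := (hW.isPreBrownianReal.indepFun_shift ⟨a, ha⟩).symm
  have hψ : Measurable fun v : ℝ≥0 → ℝ => v ⟨b - a, sub_nonneg.2 hab⟩ := measurable_pi_apply _
  have h' := h.comp (φ := fun v k => v ⟨⟨τ k, (hτ k).1⟩, (hτ k).2⟩) (by fun_prop) hψ
  convert h' using 1
  · rfl
  · ext ω
    change W b ω - W a ω = W (a + (b - a)) ω - W a ω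
    rw [add_sub_cancel]

end IsStandardBM

section Exceedance

variable {Ω ι : Type*}

def exceedanceSet (W : ι → ℝ → Ω → ℝ) (ρ : ι → ℝ → ℝ) (c : ι → ℝ) (u t : ℝ) : Set Ω :=
  {ω | ∀ i, u < W i (ρ i t) ω - c i * t}

variable [Fintype ι] {W : ι → ℝ → Ω → ℝ} {ρ : ι → ℝ → ℝ} {c : ι → ℝ} {u : ℝ}

theorem isOpen_setOf_mem_exceedanceSet {ω : Ω} (hω : ∀ i, Continuous fun t => W i t ω)
    (hρ : ∀ i, Continuous (ρ i)) : IsOpen {t | ω ∈ exceedanceSet W ρ c u t} := by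
  change IsOpen {t | ∀ i, u < W i (ρ i t) ω - c i * t}
  rw [ofPred_forall]
  exact isOpen_iInter_of_finite fun i => isOpen_lt continuous_const
    (((hω i).comp (hρ i)).sub (continuous_const.mul continuous_id))

theorem measurableSet_exceedanceSet [MeasurableSpace Ω] (hmeas : ∀ i t, Measurable (W i t))
    (t : ℝ) : MeasurableSet (exceedanceSet W ρ c u t) :=
  measurableSet_setOfPred.2 (by fun_prop)

end Exceedance

section IndependentBMs

variable {Ω ι : Type*} [MeasureSpace Ω] [Fintype ι] {W : ι → ℝ → Ω → ℝ} {T : ℝ}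

theorem indepFun_eval_sub_of_iIndepFun {κ : Type*} (hW : ∀ i, IsStandardBM (W i))
    (hWindep : iIndepFun (fun i ω t => W i t ω) ℙ) {σ : ι → κ → ℝ} {a b : ι → ℝ}
    (hσ : ∀ i k, σ i k ∈ Icc 0 (a i)) (ha : ∀ i, 0 ≤ a i) (hab : ∀ i, a i ≤ b i) :
    IndepFun (fun ω i k => W i (σ i k) ω) (fun ω i => W i (b i) ω - W i (a i) ω) ℙ := by
  have hmeas : ∀ i t, Measurable (W i t) := fun i => (hW i).1
  refine iIndepFun.indepFun_pi_of_indepFun (fun i => by fun_prop) (fun i => by fun_prop) ?_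
    fun i => (hW i).indepFun_eval_sub (ha i) (hab i) _ (hσ i)
  exact hWindep.comp (fun i path => (fun k => path (σ i k), path (b i) - path (a i)))
    fun i => by fun_prop

theorem measure_forall_le_sub_eq_prod (hW : ∀ i, IsStandardBM (W i))
    (hWindep : iIndepFun (fun i ω t => W i t ω) ℙ) {a b : ι → ℝ} (ha : ∀ i, 0 ≤ a i)
    (hab : ∀ i, a i ≤ b i) (x : ι → ℝ) :
    ℙ {ω | ∀ i, x i ≤ W i (b i) ω - W i (a i) ω} =
      ∏ i, gaussianReal 0 (b i - a i).toNNReal (Ici (x i)) := by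
  have hmeas : ∀ i t, Measurable (W i t) := fun i => (hW i).1
  have hinc : iIndepFun (fun i ω => W i (b i) ω - W i (a i) ω) ℙ :=
    hWindep.comp (fun i path => path (b i) - path (a i)) fun i => by fun_prop
  rw [ofPred_forall, hinc.meas_iInter (s := fun i => {ω | x i ≤ W i (b i) ω - W i (a i) ω})
    fun i => ⟨Ici (x i), measurableSet_Ici, rfl⟩]
  refine Finset.prod_congr rfl fun i _ => ?_
  obtain ⟨-, -, -, hlaw, -⟩ := hW i
  rw [← hlaw (a i) (b i) (ha i) (hab i), Measure.map_apply (by fun_prop) measurableSet_Ici]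
  rfl

theorem exists_le_measure_forall_le_rpow_sub (hW : ∀ i, IsStandardBM (W i))
    (hWindep : iIndepFun (fun i ω t => W i t ω) ℙ) {q : ι → ℝ} (hq : ∀ i, 1 ≤ q i)
    (c : ι → ℝ) (hT : 0 < T) :
    ∃ p : ℝ≥0∞, p ≠ 0 ∧ p ≠ ⊤ ∧ ∀ t ∈ Icc 0 T,
      p ≤ ℙ {ω | ∀ i, c i * (T - t) ≤ W i (T ^ q i) ω - W i (t ^ q i) ω} := by
  choose K hK using fun i => exists_gaussianReal_Ici_le (c i) (hq i) hT
  refine ⟨∏ i, gaussianReal 0 1 (Ici (K i)),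
    Finset.prod_ne_zero_iff.2 fun i _ => (gaussianReal_Ici_pos_s14 0 one_ne_zero _).ne',
    ENNReal.prod_ne_top fun i _ => measure_ne_top _ _, fun t ht => ?_⟩
  rw [measure_forall_le_sub_eq_prod hW hWindep (fun i => Real.rpow_nonneg ht.1 _)
    (fun i => Real.rpow_le_rpow ht.1 ht.2 (by linarith [hq i]))]
  exact Finset.prod_le_prod' fun i _ => hK i t ht

variable {ρ : ι → ℝ → ℝ} {c : ι → ℝ} {u : ℝ}

theorem mul_measure_biUnion_exceedanceSet_le (hW : ∀ i, IsStandardBM (W i))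
    (hWindep : iIndepFun (fun i ω t => W i t ω) ℙ) (hρ : ∀ i, MonotoneOn (ρ i) (Icc 0 T))
    (hρ0 : ∀ i, 0 ≤ ρ i 0) {p : ℝ≥0∞}
    (hp : ∀ t ∈ Icc 0 T, p ≤ ℙ {ω | ∀ i, c i * (T - t) ≤ W i (ρ i T) ω - W i (ρ i t) ω})
    (s : Finset ℝ) (hs : ↑s ⊆ Icc 0 T) :
    p * ℙ (⋃ t ∈ s, exceedanceSet W ρ c u t) ≤ ℙ (exceedanceSet W ρ c u T) := by
  have hmeas : ∀ i t, Measurable (W i t) := fun i => (hW i).1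
  set τ := s.orderEmbOfFin rfl
  have hτ : ∀ j, τ j ∈ Icc 0 T := fun j => hs (s.orderEmbOfFin_mem rfl j)
  have hunion : ⋃ t ∈ s, exceedanceSet W ρ c u t = ⋃ j, exceedanceSet W ρ c u (τ j) := by
    rw [← biUnion_range]
    simp [τ, Finset.range_orderEmbOfFin]
  rw [hunion]
  refine mul_measure_iUnion_le_of_disjointed (fun j => measurableSet_exceedanceSet hmeas _)
    (fun j => measurableSet_setOfPred.2 (by fun_prop)) (fun j => hp _ (hτ j)) (fun j => ?_)
    (fun j ω ⟨hpast, hfut⟩ i => by linarith [hpast i, hfut i])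
  have hρτ : ∀ i {k l}, k ≤ l → ρ i (τ k) ≤ ρ i (τ l) := fun i k l hkl =>
    hρ i (hτ k) (hτ l) (τ.monotone hkl)
  have hρτ_nonneg : ∀ i k, 0 ≤ ρ i (τ k) := fun i k =>
    (hρ0 i).trans (hρ i ⟨le_rfl, (hτ k).1.trans (hτ k).2⟩ (hτ k) (hτ k).1)
  -- The past is read off at the times `τ (min k j)`, so that it stops at `τ j`.
  have hind := indepFun_eval_sub_of_iIndepFun hW hWindep
    (σ := fun i k => ρ i (τ (min k j))) (a := fun i => ρ i (τ j)) (b := fun i => ρ i T)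
    (fun i k => ⟨hρτ_nonneg i _, hρτ i (min_le_right k j)⟩) (fun i => hρτ_nonneg i j)
    (fun i => hρ i (hτ j) ⟨(hτ j).1.trans (hτ j).2, le_rfl⟩ (hτ j).2)
  refine hind.meas_inter ?_
    ⟨{v | ∀ i, c i * (T - τ j) ≤ v i}, measurableSet_setOfPred.2 (by fun_prop), rfl⟩
  have hpast : ∀ k ≤ j, MeasurableSet[MeasurableSpace.comap
      (fun ω i k => W i (ρ i (τ (min k j))) ω) inferInstance] (exceedanceSet W ρ c u (τ k)) :=
    fun k hk => ⟨{v | ∀ i, u < v i k - c i * τ k}, measurableSet_setOfPred.2 (by fun_prop),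
      by ext; simp [exceedanceSet, min_eq_left (τ.monotone hk)]⟩
  rw [disjointed_eq_inter_compl]
  exact (hpast j le_rfl).inter
    (MeasurableSet.iInter fun k => MeasurableSet.iInter fun hk => (hpast k hk.le).compl)

theorem measure_iUnion_exceedanceSet_le (hW : ∀ i, IsStandardBM (W i))
    (hWindep : iIndepFun (fun i ω t => W i t ω) ℙ) (hρ : ∀ i, Continuous (ρ i))
    (hρ_mono : ∀ i, MonotoneOn (ρ i) (Icc 0 T)) (hρ0 : ∀ i, 0 ≤ ρ i 0) {p : ℝ≥0∞}
    (hp0 : p ≠ 0) (hp_top : p ≠ ⊤)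
    (hp : ∀ t ∈ Icc 0 T, p ≤ ℙ {ω | ∀ i, c i * (T - t) ≤ W i (ρ i T) ω - W i (ρ i t) ω}) :
    ℙ (⋃ t : Icc 0 T, exceedanceSet W ρ c u t) ≤ p⁻¹ * ℙ (exceedanceSet W ρ c u T) := by
  refine measure_iUnion_le_of_forall_finset ?_ fun s => ?_
  · filter_upwards [ae_all_iff.2 fun i => (hW i).2.2.1] with ω hω
    exact (isOpen_setOf_mem_exceedanceSet hω hρ).preimage continuous_subtype_val
  · rw [← ENNReal.mul_le_iff_le_inv hp0 hp_top]
    simpa using mul_measure_biUnion_exceedanceSet_le hW hWindep hρ_mono hρ0 hp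
      (s.map (Function.Embedding.subtype _)) (by simp)

end IndependentBMs

theorem stmt_14_general {Ω : Type*} [MeasureSpace Ω]
    {d : ℕ} (W : Fin d → ℝ → Ω → ℝ) (hW : ∀ i, IsStandardBM (W i))
    (hWindep : iIndepFun
      (fun (i : Fin d) (ω : Ω) => fun t : ℝ => W i t ω) ℙ)
    (H : Fin d → ℝ) (hH : ∀ i, H i ∈ Set.Ioc (1 / 2 : ℝ) 1)
    (c : Fin d → ℝ) (T : ℝ) (hT : 0 < T) :
    ∃ C : ℝ, 0 < C ∧ ∀ u : ℝ, 1 < u →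
      ℙ {ω | ∃ t ∈ Set.Icc (0 : ℝ) T, ∀ i, u < W i (t ^ (2 * H i)) ω - c i * t} ≤
        ENNReal.ofReal C * ℙ {ω | ∀ i, u < W i (T ^ (2 * H i)) ω - c i * T} := by
  have hq : ∀ i, 1 ≤ 2 * H i := fun i => by linarith [(hH i).1]
  obtain ⟨p, hp0, hp_top, hp⟩ := exists_le_measure_forall_le_rpow_sub hW hWindep hq c hT
  refine ⟨p⁻¹.toReal, ENNReal.toReal_pos (ENNReal.inv_ne_zero.2 hp_top)
    (ENNReal.inv_ne_top.2 hp0), fun u _ => ?_⟩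
  have hset : {ω | ∃ t ∈ Icc 0 T, ∀ i, u < W i (t ^ (2 * H i)) ω - c i * t} =
      ⋃ t : Icc 0 T, exceedanceSet W (fun i t => t ^ (2 * H i)) c u t := by
    ext
    simp [exceedanceSet]
  rw [ENNReal.ofReal_toReal (ENNReal.inv_ne_top.2 hp0), hset]
  exact measure_iUnion_exceedanceSet_le hW hWindep
    (fun i => Real.continuous_rpow_const (by linarith [hq i]))
    (fun i x hx y _ hxy => Real.rpow_le_rpow hx.1 hxy (by linarith [hq i]))
    (fun i => Real.rpow_nonneg le_rfl _) hp0 hp_top hp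

/-- **Section 3 (illustration).** For independent standard Brownian motions `W_1, …, W_d`,
Hurst indices `H_i ∈ (1/2, 1]`, drifts `c_i ∈ ℝ` and `T > 0`, there is a constant `C > 0` not
depending on `u` such that for all `u > 1`,
`P(∃ t ∈ [0,T] : ∀ i, W_i(t^{2H_i}) - c_i t > u) ≤ C P(∀ i, W_i(T^{2H_i}) - c_i T > u)`. -/
theorem stmt_14 {Ω : Type*} [MeasureSpace Ω] [IsProbabilityMeasure (ℙ : Measure Ω)]
    {d : ℕ} (W : Fin d → ℝ → Ω → ℝ) (hW : ∀ i, IsStandardBM (W i))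
    (hWindep : iIndepFun
      (fun (i : Fin d) (ω : Ω) => fun t : ℝ => W i t ω) ℙ)
    (H : Fin d → ℝ) (hH : ∀ i, H i ∈ Set.Ioc (1 / 2 : ℝ) 1)
    (c : Fin d → ℝ) (T : ℝ) (hT : 0 < T) :
    ∃ C : ℝ, 0 < C ∧ ∀ u : ℝ, 1 < u →
      ℙ {ω | ∃ t ∈ Set.Icc (0 : ℝ) T, ∀ i, u < W i (t ^ (2 * H i)) ω - c i * t} ≤
        ENNReal.ofReal C * ℙ {ω | ∀ i, u < W i (T ^ (2 * H i)) ω - c i * T} :=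
  stmt_14_general W hW hWindep H hH c T hT
end
end
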